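/- The Kirchhoff matrix K(Σ) = D(Γ) − A(Σ) of a signed simple graph Σ on n vertices is positive semidefinite, its rank over the real numbers is n − b(Σ), and its nullity is b(Σ). -/

import Mathlib

/-!
Over `ℝ`, `xᵀ K x = ½ ∑_{i ∼ j} (x_i - σ(ij) x_j)²`, so `K` is positive semidefinite and `K x = 0`
exactly when `x_i = σ(ij) x_j` along every edge. Such an `x` satisfies `x_u = σ(p) x_v` for every
walk `p` from `u` to `v`; hence it vanishes on a component carrying a negative cycle, and on a
balanced component it is determined by its value at one base vertex. Conversely, on a balanced
component every closed walk is positive: bypassing a detour removes either a cycle or an edge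
traversed back and forth. So the sign of a walk to the base vertex is a well-defined switching
function, which yields a kernel vector with any prescribed value at the base vertex. The kernel is
thus `ℝ^{b(Σ)}`, and rank–nullity gives the rank.
-/

open SimpleGraph
open scoped Classical

/-- The adjacency matrix of the signed simple graph `(G, σ)`. -/
noncomputable def signedAdj {V : Type*} [Fintype V] (G : SimpleGraph V)
    (σ : Sym2 V → ℤ) : Matrix V V ℝ :=
  Matrix.of fun i j => if G.Adj i j then (σ s(i, j) : ℝ) else 0

/-- The Kirchhoff matrix `K(Σ) = D(G) - A(Σ)`, where `D(G)` is the diagonal matrix of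
vertex degrees of the underlying graph. -/
noncomputable def kirchhoff {V : Type*} [Fintype V] [DecidableEq V]
    (G : SimpleGraph V) (σ : Sym2 V → ℤ) : Matrix V V ℝ :=
  Matrix.diagonal (fun v => (Nat.card (G.neighborSet v) : ℝ)) - signedAdj G σ

/-- `b(Σ)`: the number of connected components of `G` on which `Σ` restricts to a
balanced signed graph (every cycle in the component has sign `+1`). -/
noncomputable def numBalancedComponents {V : Type*} (G : SimpleGraph V)
    (σ : Sym2 V → ℤ) : ℕ :=
  Nat.card {c : G.ConnectedComponent //
    ∀ (v : V) (w : G.Walk v v), G.connectedComponentMk v = c → w.IsCycle →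
      (w.edges.map σ).prod = 1}

namespace SimpleGraph

variable {V : Type*} {G : SimpleGraph V} (σ : Sym2 V → ℤ) {u v w : V}

namespace Walk

def sign (p : G.Walk u v) : ℤ := (p.edges.map σ).prod

@[simp] lemma sign_nil : (nil : G.Walk u u).sign σ = 1 := rfl

@[simp] lemma sign_cons (h : G.Adj u v) (p : G.Walk v w) :
    (cons h p).sign σ = σ s(u, v) * p.sign σ := by
  simp [sign]

@[simp] lemma sign_append (p : G.Walk u v) (q : G.Walk v w) :
    (p.append q).sign σ = p.sign σ * q.sign σ := by
  simp [sign]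

@[simp] lemma sign_reverse (p : G.Walk u v) : p.reverse.sign σ = p.sign σ := by
  simp [sign, List.prod_reverse]

@[simp] lemma sign_copy {u' v' : V} (p : G.Walk u v) (hu : u = u') (hv : v = v') :
    (p.copy hu hv).sign σ = p.sign σ := by
  subst hu hv; rfl

variable {σ}

lemma isUnit_sign (hσ : ∀ e ∈ G.edgeSet, σ e = 1 ∨ σ e = -1) (p : G.Walk u v) :
    IsUnit (p.sign σ) :=
  List.prod_isUnit fun _ he ↦ by
    obtain ⟨e, he', rfl⟩ := List.mem_map.1 he
    exact Int.isUnit_iff.2 (hσ e (p.edges_subset_edgeSet he'))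

end Walk

namespace ConnectedComponent

open Walk

def IsBalanced (c : G.ConnectedComponent) : Prop :=
  ∀ (v : V) (w : G.Walk v v), G.connectedComponentMk v = c → w.IsCycle → w.sign σ = 1

variable {σ} {c : G.ConnectedComponent}

namespace IsBalanced

variable (hc : c.IsBalanced σ) (hσ : ∀ e ∈ G.edgeSet, σ e = 1 ∨ σ e = -1)
include hc hσ

lemma sign_cons_eq_one (hu : G.connectedComponentMk u = c) (h : G.Adj u v)
    {p : G.Walk v u} (hp : p.IsPath) : (cons h p).sign σ = 1 := by
  by_cases he : s(u, v) ∈ p.edges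
  · rw [hp.eq_adj_toWalk_of_mem_edges (Sym2.eq_swap ▸ he)]
    simpa [Sym2.eq_swap] using Int.isUnit_mul_self (Int.isUnit_iff.2 (hσ _ h))
  · exact hc u _ hu ((cons_isCycle_iff p h).2 ⟨hp, he⟩)

lemma sign_bypass [DecidableEq V] (p : G.Walk u v) (hu : G.connectedComponentMk u = c) :
    p.bypass.sign σ = p.sign σ := by
  induction p with
  | nil => rfl
  | @cons u w v h p ih =>
    have hw : G.connectedComponentMk w = c := (ConnectedComponent.sound h.reachable).symm.trans hu
    rw [bypass]
    split_ifs with hs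
    · have hloop := hc.sign_cons_eq_one hσ hu h ((bypass_isPath p).takeUntil hs)
      calc (p.bypass.dropUntil u hs).sign σ
          = (cons h (p.bypass.takeUntil u hs)).sign σ * (p.bypass.dropUntil u hs).sign σ := by
            rw [hloop, one_mul]
        _ = (cons h p).sign σ := by
            rw [sign_cons, mul_assoc, ← sign_append, take_spec, ih hw, sign_cons]
    · rw [sign_cons, sign_cons, ih hw]

lemma sign_eq_one_of_closed (hu : G.connectedComponentMk u = c) (p : G.Walk u u) :
    p.sign σ = 1 := by
  classical
  rw [← hc.sign_bypass hσ p hu, (isPath_iff_nil.1 p.bypass_isPath).eq_nil, sign_nil]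

lemma sign_eq (hu : G.connectedComponentMk u = c) (p q : G.Walk u v) :
    p.sign σ = q.sign σ := by
  have hpq := hc.sign_eq_one_of_closed hσ hu (p.append q.reverse)
  rw [sign_append, sign_reverse] at hpq
  calc p.sign σ = p.sign σ * (q.sign σ * q.sign σ) := by
        rw [Int.isUnit_mul_self (q.isUnit_sign hσ), mul_one]
    _ = q.sign σ := by rw [← mul_assoc, hpq, one_mul]

end IsBalanced

end ConnectedComponent

end SimpleGraph

section

open Walk Matrix Finset

variable {V : Type*} {G : SimpleGraph V} {σ : Sym2 V → ℤ} {u v : V}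

lemma numBalancedComponents_eq :
    numBalancedComponents G σ = Nat.card {c : G.ConnectedComponent // c.IsBalanced σ} :=
  rfl

variable (G σ) in
/-- The sign of a walk from `v` to the chosen base point of its component; on a balanced
component this is a switching function `τ` with `σ(uv) = τ(u) τ(v)`. -/
noncomputable def switchingFunction (v : V) : ℤ :=
  (ConnectedComponent.exact (G.connectedComponentMk v).out_eq.symm).some.sign σ

lemma switchingFunction_adj (hσ : ∀ e ∈ G.edgeSet, σ e = 1 ∨ σ e = -1)
    (hu : (G.connectedComponentMk u).IsBalanced σ) (h : G.Adj u v) :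
    switchingFunction G σ u = σ s(u, v) * switchingFunction G σ v := by
  have hmk : G.connectedComponentMk v = G.connectedComponentMk u :=
    ConnectedComponent.sound h.symm.reachable
  rw [switchingFunction, switchingFunction, ← sign_cons σ h]
  exact hu.sign_eq hσ rfl _ ((cons h _).copy rfl (by rw [hmk])) |>.trans (sign_copy ..)

lemma switchingFunction_out (hσ : ∀ e ∈ G.edgeSet, σ e = 1 ∨ σ e = -1)
    {c : G.ConnectedComponent} (hc : c.IsBalanced σ) : switchingFunction G σ c.out = 1 := by
  have hc' : G.connectedComponentMk c.out = c := c.out_eq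
  exact (sign_copy σ _ rfl (by rw [hc'])).symm.trans (hc.sign_eq_one_of_closed hσ hc' _)

variable (G σ) in
def IsSignedConstant (x : V → ℝ) : Prop :=
  ∀ i j, G.Adj i j → x i = σ s(i, j) * x j

namespace IsSignedConstant

variable {x : V → ℝ} (hx : IsSignedConstant G σ x)
include hx

lemma apply_eq_sign_mul (p : G.Walk u v) : x u = p.sign σ * x v := by
  induction p with
  | nil => simp
  | cons h p ih => rw [hx _ _ h, ih, sign_cons]; push_cast; ring

lemma apply_eq_zero_of_not_isBalanced (hσ : ∀ e ∈ G.edgeSet, σ e = 1 ∨ σ e = -1)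
    (hv : ¬(G.connectedComponentMk v).IsBalanced σ) : x v = 0 := by
  simp only [ConnectedComponent.IsBalanced, not_forall] at hv
  obtain ⟨u, w, hu, -, hw⟩ := hv
  have hneg : w.sign σ = -1 := (Int.isUnit_iff.1 (w.isUnit_sign hσ)).resolve_left hw
  have hxu : x u = 0 := by
    have := hx.apply_eq_sign_mul w
    rw [hneg] at this
    push_cast at this
    linarith
  obtain ⟨p⟩ := ConnectedComponent.exact hu
  rw [hx.apply_eq_sign_mul p.reverse, hxu, mul_zero]

lemma eq_zero_of_apply_out_eq_zero (hσ : ∀ e ∈ G.edgeSet, σ e = 1 ∨ σ e = -1)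
    (h0 : ∀ c : G.ConnectedComponent, c.IsBalanced σ → x c.out = 0) : x = 0 := by
  funext v
  by_cases h : (G.connectedComponentMk v).IsBalanced σ
  · obtain ⟨p⟩ := ConnectedComponent.exact (G.connectedComponentMk v).out_eq.symm
    rw [hx.apply_eq_sign_mul p, h0 _ h, mul_zero, Pi.zero_apply]
  · exact hx.apply_eq_zero_of_not_isBalanced hσ h

end IsSignedConstant

lemma exists_isSignedConstant_apply_out_eq (hσ : ∀ e ∈ G.edgeSet, σ e = 1 ∨ σ e = -1)
    (y : {c : G.ConnectedComponent // c.IsBalanced σ} → ℝ) :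
    ∃ x : V → ℝ, IsSignedConstant G σ x ∧ ∀ c, x c.1.out = y c := by
  refine ⟨fun v ↦ if h : (G.connectedComponentMk v).IsBalanced σ then
    switchingFunction G σ v * y ⟨_, h⟩ else 0, fun i j hij ↦ ?_, fun ⟨c, hc⟩ ↦ ?_⟩
  · have hmk : G.connectedComponentMk i = G.connectedComponentMk j :=
      ConnectedComponent.sound hij.reachable
    by_cases h : (G.connectedComponentMk i).IsBalanced σ
    · have h' : (G.connectedComponentMk j).IsBalanced σ := hmk ▸ h
      have hy : y ⟨_, h⟩ = y ⟨_, h'⟩ := congrArg y (Subtype.ext hmk)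
      simp only [dif_pos h, dif_pos h', switchingFunction_adj hσ h hij, hy]
      push_cast
      ring
    · have h' : ¬(G.connectedComponentMk j).IsBalanced σ := hmk ▸ h
      simp only [dif_neg h, dif_neg h', mul_zero]
  · have hc' : G.connectedComponentMk c.out = c := c.out_eq
    have hy : y ⟨_, hc' ▸ hc⟩ = y ⟨c, hc⟩ := congrArg y (Subtype.ext hc')
    simp only [dif_pos (hc' ▸ hc), switchingFunction_out hσ hc, hy, Int.cast_one, one_mul]

section Matrix

variable [Fintype V]

lemma signedAdj_isSymm : (signedAdj G σ).IsSymm := by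
  ext i j
  simp only [signedAdj, transpose_apply, of_apply, G.adj_comm j i, Sym2.eq_swap]

lemma dotProduct_signedAdj_mulVec (x : V → ℝ) :
    x ⬝ᵥ signedAdj G σ *ᵥ x = ∑ i, ∑ j, if G.Adj i j then σ s(i, j) * x i * x j else 0 := by
  simp only [dotProduct, mulVec, signedAdj, of_apply, mul_sum]
  refine sum_congr rfl fun i _ ↦ sum_congr rfl fun j _ ↦ ?_
  split_ifs <;> ring

variable [DecidableEq V]

lemma kirchhoff_eq_degMatrix_sub : kirchhoff G σ = G.degMatrix ℝ - signedAdj G σ := by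
  rw [kirchhoff, degMatrix]
  congr! with v
  rw [Nat.card_eq_fintype_card, card_neighborSet_eq_degree]

lemma isHermitian_kirchhoff : (kirchhoff G σ).IsHermitian := by
  rw [kirchhoff_eq_degMatrix_sub]
  exact (G.isHermitian_degMatrix ℝ).sub signedAdj_isSymm

lemma dotProduct_kirchhoff_mulVec (hσ : ∀ e ∈ G.edgeSet, σ e = 1 ∨ σ e = -1) (x : V → ℝ) :
    x ⬝ᵥ kirchhoff G σ *ᵥ x =
      (∑ i, ∑ j, if G.Adj i j then (x i - σ s(i, j) * x j) ^ 2 else 0) / 2 := by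
  have hswap : (∑ i, ∑ j, if G.Adj i j then x j ^ 2 else 0) =
      ∑ i, ∑ j, if G.Adj i j then x i ^ 2 else 0 := by
    rw [sum_comm]
    simp only [G.adj_comm]
  have hdeg : x ⬝ᵥ G.degMatrix ℝ *ᵥ x = ∑ i, ∑ j, if G.Adj i j then x i ^ 2 else 0 := by
    simp only [dotProduct_mulVec_degMatrix, degree_eq_sum_if_adj, sum_mul, ite_mul, one_mul,
      zero_mul, sq]
  rw [kirchhoff_eq_degMatrix_sub, sub_mulVec, dotProduct_sub, hdeg, dotProduct_signedAdj_mulVec]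
  have hexp : (∑ i, ∑ j, if G.Adj i j then (x i - σ s(i, j) * x j) ^ 2 else 0) =
      (∑ i, ∑ j, if G.Adj i j then x i ^ 2 else 0) + (∑ i, ∑ j, if G.Adj i j then x j ^ 2 else 0)
        - 2 * ∑ i, ∑ j, if G.Adj i j then σ s(i, j) * x i * x j else 0 := by
    simp only [mul_sum, ← sum_add_distrib, ← sum_sub_distrib]
    refine sum_congr rfl fun i _ ↦ sum_congr rfl fun j _ ↦ ?_
    split_ifs with h
    · have hσσ : (σ s(i, j) : ℝ) * σ s(i, j) = 1 := by
        exact_mod_cast Int.isUnit_mul_self (Int.isUnit_iff.2 (hσ _ h))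
      linear_combination x j ^ 2 * hσσ
    · ring
  rw [hexp, hswap]
  ring

theorem posSemidef_kirchhoff (hσ : ∀ e ∈ G.edgeSet, σ e = 1 ∨ σ e = -1) :
    (kirchhoff G σ).PosSemidef :=
  .of_dotProduct_mulVec_nonneg isHermitian_kirchhoff fun x ↦ by
    rw [star_trivial, dotProduct_kirchhoff_mulVec hσ]
    positivity

lemma kirchhoff_mulVec_eq_zero_iff (hσ : ∀ e ∈ G.edgeSet, σ e = 1 ∨ σ e = -1) {x : V → ℝ} :
    kirchhoff G σ *ᵥ x = 0 ↔ IsSignedConstant G σ x := by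
  rw [← (posSemidef_kirchhoff hσ).dotProduct_mulVec_zero_iff, star_trivial,
    dotProduct_kirchhoff_mulVec hσ]
  simp (disch := intros; positivity) [IsSignedConstant, sum_eq_zero_iff_of_nonneg, sub_eq_zero]

theorem finrank_ker_kirchhoff (hσ : ∀ e ∈ G.edgeSet, σ e = 1 ∨ σ e = -1) :
    Module.finrank ℝ (LinearMap.ker (kirchhoff G σ).mulVecLin) =
      Nat.card {c : G.ConnectedComponent // c.IsBalanced σ} := by
  have hker (x : V → ℝ) : x ∈ LinearMap.ker (kirchhoff G σ).mulVecLin ↔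
      IsSignedConstant G σ x :=
    kirchhoff_mulVec_eq_zero_iff hσ
  let f : LinearMap.ker (kirchhoff G σ).mulVecLin →ₗ[ℝ]
      ({c : G.ConnectedComponent // c.IsBalanced σ} → ℝ) :=
    LinearMap.pi fun c ↦ (LinearMap.proj c.1.out).comp (Submodule.subtype _)
  have hf : Function.Bijective f := by
    refine ⟨(injective_iff_map_eq_zero f).2 fun x hx ↦ Subtype.ext ?_, fun y ↦ ?_⟩
    · exact ((hker x).1 x.2).eq_zero_of_apply_out_eq_zero hσ fun c hc ↦ congrFun hx ⟨c, hc⟩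
    · obtain ⟨x, hx, hxy⟩ := exists_isSignedConstant_apply_out_eq hσ y
      exact ⟨⟨x, (hker x).2 hx⟩, funext hxy⟩
  rw [(LinearEquiv.ofBijective f hf).finrank_eq, Module.finrank_fintype_fun_eq_card,
    Nat.card_eq_fintype_card]

end Matrix

end

/-- The Kirchhoff matrix of a signed simple graph on `n` vertices is positive
semidefinite, its rank over `ℝ` is `n - b(Σ)`, and its nullity is `b(Σ)`. -/
theorem kirchhoff_posSemidef_rank_nullity {V : Type*} [Fintype V] [DecidableEq V]
    (G : SimpleGraph V) (σ : Sym2 V → ℤ)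
    (hσ : ∀ e ∈ G.edgeSet, σ e = 1 ∨ σ e = -1) :
    (kirchhoff G σ).PosSemidef ∧
    (kirchhoff G σ).rank = Fintype.card V - numBalancedComponents G σ ∧
    Module.finrank ℝ (LinearMap.ker (kirchhoff G σ).mulVecLin) =
      numBalancedComponents G σ := by
  have hnullity := (finrank_ker_kirchhoff hσ).trans numBalancedComponents_eq.symm
  refine ⟨posSemidef_kirchhoff hσ, ?_, hnullity⟩
  have hrank := LinearMap.finrank_range_add_finrank_ker (kirchhoff G σ).mulVecLin
  rw [Module.finrank_fintype_fun_eq_card, hnullity] at hrank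
  rw [Matrix.rank]
  omega
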